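/- Let q₀(x) = xᵀA₀x, q₁(x) = xᵀA₁x, q₂(x) = xᵀA₂x with A₀, A₁, A₂ symmetric n×n matrices. Suppose there exist α ∈ R and β ≥ 0 with (A₀ + αA₁ + βA₂)x* = 0, q₁(x*) = 1, q₂(x*) ≤ 1, β(q₂(x*) − 1) = 0, and A₀ + αA₁ + βA₂ positive semidefinite. Then x* is a global minimizer of q₀ over {x : q₁(x) = 1, q₂(x) ≤ 1}. -/
import Mathlib

open Matrix

theorem stmt11 {n : ℕ} (A₀ A₁ A₂ : Matrix (Fin n) (Fin n) ℝ)
    (h0 : A₀ᵀ = A₀) (h1 : A₁ᵀ = A₁) (h2 : A₂ᵀ = A₂)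
    (xs : Fin n → ℝ) (α β : ℝ) (hβ : 0 ≤ β)
    (hstat : (A₀ + α • A₁ + β • A₂).mulVec xs = 0)
    (hf1 : xs ⬝ᵥ A₁.mulVec xs = 1)
    (hf2 : xs ⬝ᵥ A₂.mulVec xs ≤ 1)
    (hcomp : β * (xs ⬝ᵥ A₂.mulVec xs - 1) = 0)
    (hpsd : ∀ v : Fin n → ℝ, 0 ≤ v ⬝ᵥ (A₀ + α • A₁ + β • A₂).mulVec v) :
    ∀ x : Fin n → ℝ, x ⬝ᵥ A₁.mulVec x = 1 → x ⬝ᵥ A₂.mulVec x ≤ 1 →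
      xs ⬝ᵥ A₀.mulVec xs ≤ x ⬝ᵥ A₀.mulVec x := by
  have key : ∀ v : Fin n → ℝ, v ⬝ᵥ (A₀ + α • A₁ + β • A₂).mulVec v
      = v ⬝ᵥ A₀.mulVec v + α * (v ⬝ᵥ A₁.mulVec v) + β * (v ⬝ᵥ A₂.mulVec v) := by
    intro v
    simp [add_mulVec, smul_mulVec, dotProduct_add, dotProduct_smul, smul_eq_mul]
  have hxs : xs ⬝ᵥ A₀.mulVec xs + α * 1 + β * (xs ⬝ᵥ A₂.mulVec xs) = 0 := by
    rw [← hf1, ← key, hstat, dotProduct_zero]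
  intro x hx1 hx2
  have h := hpsd x
  rw [key x, hx1] at h
  nlinarith [h, hcomp, hxs, mul_le_mul_of_nonneg_left hx2 hβ]
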